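/- Let E be a real Banach space, and Q, R : E → E continuous linear maps with Q ∘ Q = 0. Set D := Q ∘ R + R ∘ Q. Assume: (i) exp(s • D) converges in operator norm to some continuous linear map P as s → ∞, and (ii) the operator-valued improper integral H := ∫_0^∞ exp(s • D) ∘ R ds converges (as a Bochner integral in the space of continuous linear maps). Then P - id = Q ∘ H + H ∘ Q. -/

import Mathlib

/-!
Since `Q² = 0`, `Q` commutes with `D = QR + RQ` and hence with every `exp (s • D)`, so
`exp (s • D) * D = Q * (exp (s • D) * R) + (exp (s • D) * R) * Q`. Integrating over `s ∈ (0, ∞)`,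
the left side gives `P - 1` by the fundamental theorem of calculus, since `exp (s • D) * D` is the
derivative of `exp (s • D)`, and the right side gives `Q * H + H * Q`.
-/

open Filter MeasureTheory NormedSpace Topology

theorem Commute.self_mul_add_mul_self_of_mul_self_eq_zero {R : Type*} [Ring R] {q r : R}
    (hq : q * q = 0) : Commute q (q * r + r * q) := by
  simp only [Commute, SemiconjBy, mul_add, add_mul, ← mul_assoc, hq, zero_mul]
  simp only [mul_assoc, hq, mul_zero, zero_add, add_zero]

section NormedAlgebra

variable {A : Type*} [NormedRing A] [NormedAlgebra ℝ A]

theorem exp_smul_mul_eq_of_mul_self_eq_zero {Q R D : A} (hQ : Q * Q = 0)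
    (hD : D = Q * R + R * Q) (s : ℝ) :
    exp (s • D) * D = Q * (exp (s • D) * R) + exp (s • D) * R * Q := by
  have hcomm : Commute Q (exp (s • D)) :=
    ((hD ▸ Commute.self_mul_add_mul_self_of_mul_self_eq_zero hQ).smul_right s).exp_right
  calc exp (s • D) * D = exp (s • D) * (Q * R + R * Q) := by rw [hD]
    _ = exp (s • D) * Q * R + exp (s • D) * R * Q := by rw [mul_add, mul_assoc, mul_assoc]
    _ = Q * (exp (s • D) * R) + exp (s • D) * R * Q := by rw [← hcomm.eq, mul_assoc]

variable [CompleteSpace A]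

theorem integral_Ioi_exp_smul_mul_eq_sub_one {D P : A}
    (hP : Tendsto (fun s : ℝ => exp (s • D)) atTop (𝓝 P))
    (hint : IntegrableOn (fun s : ℝ => exp (s • D) * D) (Set.Ioi 0)) :
    ∫ s in Set.Ioi (0 : ℝ), exp (s • D) * D = P - 1 := by
  simpa using integral_Ioi_of_hasDerivAt_of_tendsto'
    (fun s _ => hasDerivAt_exp_smul_const D s) hint hP

theorem sub_one_eq_mul_integral_add_integral_mul {Q R D P : A} (hQ : Q * Q = 0)
    (hD : D = Q * R + R * Q)
    (hP : Tendsto (fun s : ℝ => exp (s • D)) atTop (𝓝 P))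
    (hint : IntegrableOn (fun s : ℝ => exp (s • D) * R) (Set.Ioi 0)) :
    P - 1 = Q * (∫ s in Set.Ioi (0 : ℝ), exp (s • D) * R)
      + (∫ s in Set.Ioi (0 : ℝ), exp (s • D) * R) * Q := by
  have hsplit := exp_smul_mul_eq_of_mul_self_eq_zero hQ hD
  have hintD : IntegrableOn (fun s : ℝ => exp (s • D) * D) (Set.Ioi 0) := by
    simp only [IntegrableOn, hsplit]
    exact (hint.const_mul Q).fun_add (hint.mul_const Q)
  rw [← integral_Ioi_exp_smul_mul_eq_sub_one hP hintD, ← integral_const_mul_of_integrable hint,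
    ← integral_mul_const_of_integrable hint, ← integral_add (hint.const_mul Q) (hint.mul_const Q)]
  simp only [hsplit]

end NormedAlgebra

/-- Abstract homotopy formula: if `Q ∘ Q = 0`, `D := Q ∘ R + R ∘ Q`,
`exp (s • D) → P` in operator norm as `s → ∞`, and the operator-valued improper
integral `H := ∫_0^∞ exp (s • D) ∘ R ds` converges, then
`P - id = Q ∘ H + H ∘ Q`. -/
theorem homotopy_formula
    (E : Type*) [NormedAddCommGroup E] [NormedSpace ℝ E] [CompleteSpace E]
    (Q R : E →L[ℝ] E) (hQ : Q.comp Q = 0)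
    (D : E →L[ℝ] E) (hDdef : D = Q.comp R + R.comp Q)
    (P : E →L[ℝ] E)
    (hP : Tendsto (fun s : ℝ => NormedSpace.exp (s • D)) atTop (nhds P))
    (hInt : IntegrableOn (fun s : ℝ => (NormedSpace.exp (s • D)).comp R)
      (Set.Ioi (0 : ℝ)))
    (H : E →L[ℝ] E)
    (hH : H = ∫ s in Set.Ioi (0 : ℝ), (NormedSpace.exp (s • D)).comp R) :
    P - ContinuousLinearMap.id ℝ E = Q.comp H + H.comp Q := by
  subst hH
  exact sub_one_eq_mul_integral_add_integral_mul hQ hDdef hP hInt
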